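/- First best is asymmetric (uniform case): for every A ∈ (√3/3, 1): (i) for every p ∈ [0,1], p·D1¹(p,p) + p·D2²(p,p) = p·(1−p²) ≤ 2√3/9; and (ii) there exist prices p1, p2 with 0 < p2 < p1 ≤ 1, p2 ≤ A and p1 − p2 ≤ 1 − A such that p1·D1¹(p1,p2) + p2·D2²(p1,p2) > 2√3/9. Hence a multiproduct seller who makes seller 1 prominent strictly improves on the best symmetric price pair by charging asymmetric prices. -/
import Mathlib


/-- Demand of seller 1 when ranked first (uniform match utilities). -/
noncomputable def D11 (A p1 p2 : ℝ) : ℝ := A^2/2 - p2^2/2 - A - p1 + p2 + 1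

/-- Demand of seller 2 when ranked second (uniform match utilities). -/
noncomputable def D22 (A p1 p2 : ℝ) : ℝ := -A^2/2 + p2^2/2 - p1*p2 + A + p1 - p2

/-- First best is asymmetric (uniform case): for `A ∈ (√3/3, 1)`,
symmetric prices yield profit `p·(1-p²) ≤ 2√3/9`, while some admissible
asymmetric price pair with seller 1 prominent yields strictly more. -/
theorem first_best_asymmetric
    (A : ℝ) (hA : A ∈ Set.Ioo (Real.sqrt 3 / 3) 1) :
    (∀ p ∈ Set.Icc (0:ℝ) 1,
        p * D11 A p p + p * D22 A p p = p * (1 - p^2)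
          ∧ p * (1 - p^2) ≤ 2 * Real.sqrt 3 / 9)
      ∧
    (∃ p1 p2 : ℝ, 0 < p2 ∧ p2 < p1 ∧ p1 ≤ 1 ∧ p2 ≤ A ∧ p1 - p2 ≤ 1 - A ∧
        2 * Real.sqrt 3 / 9 < p1 * D11 A p1 p2 + p2 * D22 A p1 p2) := by
  obtain ⟨hA1, hA2⟩ := hA
  have h3 : Real.sqrt 3 ^ 2 = 3 := Real.sq_sqrt (by norm_num)
  have hs0 : (0:ℝ) < Real.sqrt 3 := Real.sqrt_pos.mpr (by norm_num)
  have hs2 : Real.sqrt 3 < 2 := by nlinarith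
  constructor
  · intro p hp
    obtain ⟨hp0, hp1⟩ := hp
    constructor
    · simp only [D11, D22]; ring
    · nlinarith [mul_nonneg (sq_nonneg (p - Real.sqrt 3 / 3))
        (by positivity : (0:ℝ) ≤ p + 2 * Real.sqrt 3 / 3), h3, hs0]
  · refine ⟨Real.sqrt 3 / 3 + (1 - A)^2 / 4, Real.sqrt 3 / 3, by positivity,
      by nlinarith, by nlinarith, le_of_lt hA1, by nlinarith, ?_⟩
    have key : (Real.sqrt 3 / 3 + (1 - A)^2 / 4) *
        D11 A (Real.sqrt 3 / 3 + (1 - A)^2 / 4) (Real.sqrt 3 / 3)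
        + (Real.sqrt 3 / 3) *
        D22 A (Real.sqrt 3 / 3 + (1 - A)^2 / 4) (Real.sqrt 3 / 3)
        - 2 * Real.sqrt 3 / 9 = (1 - A)^4 / 16 := by
      simp only [D11, D22]; nlinarith [h3, sq_nonneg (1 - A)]
    nlinarith [pow_pos (by linarith : (0:ℝ) < 1 - A) 4]
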